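/- For all real ν ≥ 1/2 and all integers d ≥ 1, Γ(ν + d/2)/Γ(ν) ≥ ν^{d/2}/√2. In particular, when d is even one has the stronger bound Γ(ν + d/2)/Γ(ν) ≥ ν^{d/2}. -/
import Mathlib

open Real Set

lemma csG {x : ℝ} (hx : 0 < x) :
    Real.Gamma (x + 1/2) ^ 2 ≤ Real.Gamma x * Real.Gamma (x + 1) := by
  have h := Real.convexOn_log_Gamma.2 (mem_Ioi.mpr hx)
    (mem_Ioi.mpr (by linarith : (0:ℝ) < x + 1))
    (by norm_num : (0:ℝ) ≤ 1/2) (by norm_num : (0:ℝ) ≤ 1/2) (by norm_num)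
  simp only [smul_eq_mul, Function.comp_apply] at h
  have hm : (1/2 : ℝ) * x + 1/2 * (x + 1) = x + 1/2 := by ring
  rw [hm] at h
  have p1 : 0 < Real.Gamma x := Real.Gamma_pos_of_pos hx
  have p2 : 0 < Real.Gamma (x + 1) := Real.Gamma_pos_of_pos (by linarith)
  have p3 : 0 < Real.Gamma (x + 1/2) := Real.Gamma_pos_of_pos (by linarith)
  have h2 : Real.log (Real.Gamma (x+1/2) ^ 2) ≤ Real.log (Real.Gamma x * Real.Gamma (x+1)) := by
    rw [Real.log_pow, Real.log_mul p1.ne' p2.ne']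
    push_cast; linarith
  exact (Real.log_le_log_iff (by positivity) (by positivity)).mp h2

lemma wendel {x : ℝ} (hx : 1/2 ≤ x) :
    Real.sqrt (x / 2) * Real.Gamma x ≤ Real.Gamma (x + 1/2) := by
  have hx0 : 0 < x := by linarith
  have h1 := csG hx0
  have h2 := csG (by linarith : (0:ℝ) < x + 1/2)
  have e1 : Real.Gamma (x + 1) = x * Real.Gamma x := by
    rw [Real.Gamma_add_one hx0.ne']
  have e2 : x + 1/2 + 1/2 = x + 1 := by ring
  rw [e2, e1] at h2
  have e4 : Real.Gamma (x + 1/2 + 1) = (x + 1/2) * Real.Gamma (x + 1/2) := by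
    rw [Real.Gamma_add_one (by positivity : (x + 1/2) ≠ 0)]
  rw [e4] at h2
  have p3 : 0 < Real.Gamma (x + 1/2) := Real.Gamma_pos_of_pos (by linarith)
  have p1 : 0 < Real.Gamma x := Real.Gamma_pos_of_pos hx0
  have key : (x/2) * Real.Gamma x ^ 2 ≤ Real.Gamma (x + 1/2) ^ 2 := by
    nlinarith [sq_nonneg (Real.Gamma x), sq_nonneg (Real.Gamma (x+1/2))]
  calc Real.sqrt (x/2) * Real.Gamma x = Real.sqrt ((x/2) * Real.Gamma x ^ 2) := by
        rw [Real.sqrt_mul (by linarith), Real.sqrt_sq p1.le]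
    _ ≤ Real.sqrt (Real.Gamma (x + 1/2) ^ 2) := Real.sqrt_le_sqrt key
    _ = Real.Gamma (x + 1/2) := Real.sqrt_sq p3.le

lemma ratioA (k : ℕ) {x : ℝ} (hx : 0 < x) :
    x ^ k * Real.Gamma x ≤ Real.Gamma (x + k) := by
  induction k with
  | zero => simp
  | succ n ih =>
    have h1 : x + (n + 1 : ℕ) = (x + n) + 1 := by push_cast; ring
    rw [h1, Real.Gamma_add_one (by positivity : (x + (n:ℝ)) ≠ 0)]
    have hxn : x ≤ x + n := by simp [Nat.cast_nonneg]
    have p : 0 < Real.Gamma x := Real.Gamma_pos_of_pos hx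
    calc x ^ (n+1) * Real.Gamma x = x * (x ^ n * Real.Gamma x) := by ring
      _ ≤ (x + n) * (x ^ n * Real.Gamma x) :=
          mul_le_mul_of_nonneg_right hxn (by positivity)
      _ ≤ (x + n) * Real.Gamma (x + n) :=
          mul_le_mul_of_nonneg_left ih (by positivity)

theorem stmt5 (d : ℕ) (hd : 1 ≤ d) (ν : ℝ) (hν : 1 / 2 ≤ ν) :
    Real.Gamma (ν + (d : ℝ) / 2) / Real.Gamma ν ≥ ν ^ ((d : ℝ) / 2) / Real.sqrt 2 ∧
    (Even d → Real.Gamma (ν + (d : ℝ) / 2) / Real.Gamma ν ≥ ν ^ ((d : ℝ) / 2)) := by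
  have hν0 : 0 < ν := by linarith
  have pΓ : 0 < Real.Gamma ν := Real.Gamma_pos_of_pos hν0
  have heven : Even d → Real.Gamma (ν + (d : ℝ) / 2) / Real.Gamma ν ≥ ν ^ ((d : ℝ) / 2) := by
    rintro ⟨r, rfl⟩
    have hc : ((r + r : ℕ) : ℝ) / 2 = (r : ℝ) := by push_cast; ring
    rw [hc, Real.rpow_natCast, ge_iff_le, le_div_iff₀ pΓ]
    exact ratioA r hν0
  constructor
  · rcases Nat.even_or_odd d with he | ho
    · refine le_trans ?_ (heven he)
      have : (0:ℝ) ≤ ν ^ ((d:ℝ)/2) := (Real.rpow_pos_of_pos hν0 _).le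
      have h2 : 1 ≤ Real.sqrt 2 := by
        rw [show (1:ℝ) = Real.sqrt 1 by simp]
        exact Real.sqrt_le_sqrt (by norm_num)
      exact div_le_self this h2
    · obtain ⟨k, rfl⟩ := ho
      have hc : ((2 * k + 1 : ℕ) : ℝ) / 2 = (k : ℝ) + 1/2 := by push_cast; ring
      rw [hc, ge_iff_le, div_le_div_iff₀ (Real.sqrt_pos.mpr (by norm_num)) pΓ]
      have key : ν ^ ((k:ℝ) + 1/2) = ν ^ k * Real.sqrt ν := by
        rw [Real.rpow_add hν0, Real.rpow_natCast, Real.sqrt_eq_rpow]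
      have hsq : Real.sqrt ν = Real.sqrt 2 * Real.sqrt (ν/2) := by
        rw [← Real.sqrt_mul (by norm_num : (0:ℝ) ≤ 2), show (2:ℝ)*(ν/2)=ν by ring]
      have chain : ν^k * Real.sqrt (ν/2) * Real.Gamma ν ≤ Real.Gamma (ν + ((k:ℝ)+1/2)) := by
        have w := wendel hν
        have r := ratioA k (show (0:ℝ) < ν + 1/2 by linarith)
        have hpow : ν^k ≤ (ν+1/2)^k := pow_le_pow_left₀ hν0.le (by linarith) k
        have e : ν + 1/2 + (k:ℝ) = ν + ((k:ℝ)+1/2) := by ring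
        calc ν^k * Real.sqrt (ν/2) * Real.Gamma ν
            = ν^k * (Real.sqrt (ν/2) * Real.Gamma ν) := by ring
          _ ≤ ν^k * Real.Gamma (ν+1/2) := mul_le_mul_of_nonneg_left w (by positivity)
          _ ≤ (ν+1/2)^k * Real.Gamma (ν+1/2) :=
              mul_le_mul_of_nonneg_right hpow (Real.Gamma_pos_of_pos (by linarith)).le
          _ ≤ Real.Gamma (ν+1/2+(k:ℝ)) := r
          _ = Real.Gamma (ν + ((k:ℝ)+1/2)) := by rw [e]
      rw [key]
      calc ν^k * Real.sqrt ν * Real.Gamma ν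
          = Real.sqrt 2 * (ν^k * Real.sqrt (ν/2) * Real.Gamma ν) := by rw [hsq]; ring
        _ ≤ Real.sqrt 2 * Real.Gamma (ν + ((k:ℝ)+1/2)) :=
            mul_le_mul_of_nonneg_left chain (Real.sqrt_nonneg 2)
        _ = Real.Gamma (ν + ((k:ℝ)+1/2)) * Real.sqrt 2 := mul_comm _ _
  · exact heven
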